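/- arXiv:1509.06221 — 2 statements merged into one kernel-verified Lean document; each statement's English description precedes it below -/
import Mathlib

section
/- Let λ > 0 and u a nontrivial solution of -u'' = λu on (-1,1) with u ∈ R_k for some k ≥ 0, where R_k is defined below. Then λ_{k-1}^M < λ < λ_{k+1}^M, where λ_j^M = ((2j+1)π/4)² are the mixed (Dirichlet–Neumann) eigenvalues of -u'' = λu on (-1,1) (with λ_{-1}^M := 0). -/
/-- Membership of `R_k^+`: `u'(-1) > 0`, `u(1)` has sign `(-1)^k`, and `u` has
only simple zeros in `(-1,1)`, either `k` or `k+1` of them. -/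
def RkPlus (k : ℕ) (u : ℝ → ℝ) : Prop :=
  0 < deriv u (-1) ∧
  (if Even k then 0 < u 1 else u 1 < 0) ∧
  (∀ x ∈ Set.Ioo (-1 : ℝ) 1, u x = 0 → deriv u x ≠ 0) ∧
  {x ∈ Set.Ioo (-1 : ℝ) 1 | u x = 0}.Finite ∧
  ({x ∈ Set.Ioo (-1 : ℝ) 1 | u x = 0}.ncard = k ∨
    {x ∈ Set.Ioo (-1 : ℝ) 1 | u x = 0}.ncard = k + 1)

/-!
On `[-1, 1]` a solution of `-u'' = λu` is a sinusoid `u x = r sin (ω (x + 1) + ψ)` with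
`ω = √λ`, and `u'(-1) > 0` lets us take `r > 0` and `|ψ| < π / 2`. The zeros of `u` in `(-1, 1)`
are the multiples of `π` passed by the phase on `(ψ, ψ + 2ω)`, and the sign of `u 1` gives the
parity of `⌊(ψ + 2ω) / π⌋`. A zero count in `{k, k + 1}` then forces
`kπ < ψ + 2ω < (k + 1)π`, i.e. `(2k - 1)π/4 < ω < (2k + 3)π/4`.
-/

open Real Set

theorem setOf_sin_eq_zero_Ioo (a b : ℝ) :
    {t ∈ Ioo a b | sin t = 0} = (fun j : ℤ => j * π) '' (Finset.Ioo ⌊a / π⌋ ⌈b / π⌉ : Set ℤ) := by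
  ext t
  simp only [mem_Ioo, mem_image, Finset.coe_Ioo, Int.floor_lt, Int.lt_ceil,
    div_lt_iff₀ pi_pos, lt_div_iff₀ pi_pos]
  constructor
  · rintro ⟨hab, hsin⟩
    obtain ⟨j, rfl⟩ := sin_eq_zero_iff.1 hsin
    exact ⟨j, hab, rfl⟩
  · rintro ⟨j, hab, rfl⟩
    exact ⟨hab, sin_int_mul_pi j⟩

theorem ncard_setOf_sin_eq_zero_Ioo (a b : ℝ) :
    {t ∈ Ioo a b | sin t = 0}.ncard = (⌈b / π⌉ - ⌊a / π⌋ - 1).toNat := by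
  have hinj : Function.Injective fun j : ℤ => (j : ℝ) * π :=
    (mul_left_injective₀ pi_ne_zero).comp Int.cast_injective
  rw [setOf_sin_eq_zero_Ioo, ncard_image_of_injective _ hinj, ncard_coe_finset, Int.card_Ioo]

theorem even_floor_div_pi_iff {β : ℝ} (hβ : sin β ≠ 0) : Even ⌊β / π⌋ ↔ 0 < sin β := by
  set n := ⌊β / π⌋
  have hle : n * π ≤ β := (le_div_iff₀ pi_pos).1 (Int.floor_le _)
  have hne : n * π ≠ β := fun h => hβ (h ▸ sin_int_mul_pi n)
  have hlt : β < (n + 1) * π := (div_lt_iff₀ pi_pos).1 (Int.lt_floor_add_one _)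
  have hpos : 0 < sin (β - n * π) :=
    sin_pos_of_pos_of_lt_pi (by linarith [hle.lt_of_ne hne]) (by linarith)
  have hsin : sin β = (-1) ^ n * sin (β - n * π) := by rw [← sin_add_int_mul_pi, sub_add_cancel]
  rcases n.even_or_odd with hn | hn
  · simp [hn, hsin, hn.neg_one_zpow, hpos]
  · simp [Int.not_even_iff_odd.2 hn, hsin, hn.neg_one_zpow, hpos.le]

theorem mul_pi_lt_and_lt_of_ncard_zeros {ψ β : ℝ} {k : ℕ} (hψ : |ψ| < π / 2) (hψβ : ψ < β)
    (hsign : if Even k then 0 < sin β else sin β < 0)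
    (hcount : {t ∈ Ioo ψ β | sin t = 0}.ncard = k ∨ {t ∈ Ioo ψ β | sin t = 0}.ncard = k + 1) :
    k * π < β ∧ β < (k + 1) * π := by
  have hβ : sin β ≠ 0 := by split_ifs at hsign <;> [exact hsign.ne'; exact hsign.ne]
  have hpar : Even ⌊β / π⌋ ↔ Even k := by
    rw [even_floor_div_pi_iff hβ]
    split_ifs at hsign with hk <;> simp [hk, hsign, hsign.le]
  have hceil : ⌈β / π⌉ = ⌊β / π⌋ + 1 := by
    refine (Int.ceil_eq_floor_add_one_iff_notMem _).2 fun ⟨m, hm⟩ => hβ ?_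
    rw [← (eq_div_iff pi_ne_zero).1 hm, sin_int_mul_pi]
  obtain ⟨hψ₁, hψ₂⟩ := abs_lt.1 hψ
  have hψfloor : -1 ≤ ⌊ψ / π⌋ ∧ ⌊ψ / π⌋ ≤ 0 := by
    rw [Int.le_floor, Int.floor_le_iff, le_div_iff₀ pi_pos, div_lt_iff₀ pi_pos]
    constructor <;> push_cast <;> linarith
  have hβfloor : -1 ≤ ⌊β / π⌋ := by
    rw [Int.le_floor, le_div_iff₀ pi_pos]
    push_cast
    linarith
  rw [ncard_setOf_sin_eq_zero_Ioo, hceil] at hcount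
  have hn : ⌊β / π⌋ = k := by
    rw [Int.even_iff, Nat.even_iff] at hpar
    omega
  obtain ⟨hle, hlt⟩ := Int.floor_eq_iff.1 hn
  rw [le_div_iff₀ pi_pos] at hle
  rw [div_lt_iff₀ pi_pos] at hlt
  have hne : (k : ℤ) * π ≠ β := fun h => hβ (h ▸ sin_int_mul_pi _)
  exact ⟨by exact_mod_cast hle.lt_of_ne hne, by exact_mod_cast hlt⟩

section HarmonicOscillator

variable {a b ω : ℝ} {u : ℝ → ℝ}

theorem exists_eqOn_Ioo_cos_sin (hω : ω ≠ 0) (hu : ContDiffOn ℝ 2 u (Ioo a b))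
    (hode : ∀ x ∈ Ioo a b, deriv (deriv u) x = -ω ^ 2 * u x) :
    ∃ A B : ℝ, EqOn u (fun x => A * cos (ω * (x - a)) + B * sin (ω * (x - a))) (Ioo a b) := by
  rw [show (2 : WithTop ℕ∞) = 1 + 1 from rfl, contDiffOn_succ_iff_deriv_of_isOpen isOpen_Ioo]
    at hu
  obtain ⟨hu₁, -, hu₂⟩ := hu
  have hd : ∀ x ∈ Ioo a b, HasDerivAt u (deriv u x) x := fun x hx =>
    (hu₁.differentiableAt (isOpen_Ioo.mem_nhds hx)).hasDerivAt
  have hd₂ : ∀ x ∈ Ioo a b, HasDerivAt (deriv u) (deriv (deriv u) x) x := fun x hx =>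
    ((hu₂.differentiableOn one_ne_zero).differentiableAt (isOpen_Ioo.mem_nhds hx)).hasDerivAt
  have hθ : ∀ x, HasDerivAt (fun y => ω * (y - a)) ω x := fun x => by
    simpa using ((hasDerivAt_id x).sub_const a).const_mul ω
  -- `(ωu, u')` in the frame rotating with phase `ω (y - a)`; both coordinates are first integrals.
  set F := fun y => ω * u y * cos (ω * (y - a)) - deriv u y * sin (ω * (y - a))
  set G := fun y => deriv u y * cos (ω * (y - a)) + ω * u y * sin (ω * (y - a))
  have hF : ∀ x ∈ Ioo a b, HasDerivAt F 0 x := fun x hx => by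
    refine ((((hd x hx).const_mul ω).mul (hθ x).cos).sub ((hd₂ x hx).mul (hθ x).sin)).congr_deriv ?_
    rw [hode x hx]
    ring
  have hG : ∀ x ∈ Ioo a b, HasDerivAt G 0 x := fun x hx => by
    refine (((hd₂ x hx).mul (hθ x).cos).add (((hd x hx).const_mul ω).mul (hθ x).sin)).congr_deriv ?_
    rw [hode x hx]
    ring
  have hconst : ∀ H : ℝ → ℝ, (∀ x ∈ Ioo a b, HasDerivAt H 0 x) → ∃ c, ∀ x ∈ Ioo a b, H x = c :=
    fun H hH => isOpen_Ioo.exists_is_const_of_deriv_eq_zero isPreconnected_Ioo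
      (fun x hx => (hH x hx).differentiableAt.differentiableWithinAt) fun x hx => (hH x hx).deriv
  obtain ⟨p, hp⟩ := hconst F hF
  obtain ⟨q, hq⟩ := hconst G hG
  refine ⟨p / ω, q / ω, fun x hx => ?_⟩
  have hFG : ω * u x = F x * cos (ω * (x - a)) + G x * sin (ω * (x - a)) := by
    simp only [F, G]
    linear_combination (-(ω * u x)) * sin_sq_add_cos_sq (ω * (x - a))
  rw [hp x hx, hq x hx] at hFG
  field_simp
  linarith

theorem exists_eqOn_Icc_cos_sin (hω : ω ≠ 0) (hab : a < b) (hu : ContDiffOn ℝ 2 u (Icc a b))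
    (hode : ∀ x ∈ Ioo a b, deriv (deriv u) x = -ω ^ 2 * u x) :
    ∃ A B : ℝ, EqOn u (fun x => A * cos (ω * (x - a)) + B * sin (ω * (x - a))) (Icc a b) := by
  obtain ⟨A, B, h⟩ := exists_eqOn_Ioo_cos_sin hω (hu.mono Ioo_subset_Icc_self) hode
  exact ⟨A, B, h.of_subset_closure hu.continuousOn (by fun_prop) Ioo_subset_Icc_self
    (closure_Ioo hab.ne).ge⟩

end HarmonicOscillator

theorem deriv_eq_of_eqOn {u g : ℝ → ℝ} {s : Set ℝ} {a g' : ℝ} (hs : UniqueDiffWithinAt ℝ s a)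
    (ha : a ∈ s) (hu : DifferentiableAt ℝ u a) (heq : EqOn u g s) (hg : HasDerivAt g g' a) :
    deriv u a = g' :=
  hs.eq_deriv _ hu.hasDerivAt.hasDerivWithinAt (hg.hasDerivWithinAt.congr heq (heq ha))

theorem exists_mul_sin_add_of_pos {A B : ℝ} (hB : 0 < B) :
    ∃ r > 0, ∃ ψ, |ψ| < π / 2 ∧ ∀ θ, A * cos θ + B * sin θ = r * sin (θ + ψ) := by
  set z : ℂ := ⟨B, A⟩
  have hz : z ≠ 0 := fun h => hB.ne' (congrArg Complex.re h)
  refine ⟨‖z‖, norm_pos_iff.2 hz, z.arg, Complex.abs_arg_lt_pi_div_two_iff.2 (Or.inl hB),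
    fun θ => ?_⟩
  rw [sin_add]
  linear_combination (-sin θ) * Complex.norm_mul_cos_arg z - cos θ * Complex.norm_mul_sin_arg z

theorem RkPlus.frequency_bounds {ω : ℝ} {u : ℝ → ℝ} {k : ℕ} (hω : 0 < ω)
    (hu : ContDiffOn ℝ 2 u (Icc (-1) 1))
    (hode : ∀ x ∈ Ioo (-1 : ℝ) 1, deriv (deriv u) x = -ω ^ 2 * u x) (hR : RkPlus k u) :
    (2 * k - 1) * π / 4 < ω ∧ ω < (2 * k + 3) * π / 4 := by
  obtain ⟨hd, hsign, -, -, hcount⟩ := hR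
  have hI : (-1 : ℝ) < 1 := by norm_num
  obtain ⟨A, B, hAB⟩ := exists_eqOn_Icc_cos_sin hω.ne' hI hu hode
  have hB : 0 < B := by
    have hg : HasDerivAt (fun x => A * cos (ω * (x - -1)) + B * sin (ω * (x - -1))) (B * ω)
        (-1) := by
      have hθ : HasDerivAt (fun x => ω * (x - -1)) ω (-1) := by
        simpa using ((hasDerivAt_id (-1 : ℝ)).sub_const (-1)).const_mul ω
      refine ((hθ.cos.const_mul A).add (hθ.sin.const_mul B)).congr_deriv ?_
      simp
    rw [deriv_eq_of_eqOn (uniqueDiffOn_Icc hI _ (left_mem_Icc.2 hI.le)) (left_mem_Icc.2 hI.le)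
      (differentiableAt_of_deriv_ne_zero hd.ne') hAB hg] at hd
    exact pos_of_mul_pos_left hd hω.le
  obtain ⟨r, hr, ψ, hψ, hrψ⟩ := exists_mul_sin_add_of_pos (A := A) hB
  have hu_eq : ∀ x ∈ Icc (-1 : ℝ) 1, u x = r * sin (ω * (x + 1) + ψ) := fun x hx => by
    simp only [hAB hx, sub_neg_eq_add, hrψ]
  have hzeros : {x ∈ Ioo (-1 : ℝ) 1 | u x = 0} =
      (fun x => ω * (x + 1) + ψ) ⁻¹' {t ∈ Ioo ψ (ψ + 2 * ω) | sin t = 0} := by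
    ext x
    have hIoo : -1 < x ∧ x < 1 ↔ ψ < ω * (x + 1) + ψ ∧ ω * (x + 1) + ψ < ψ + 2 * ω := by
      constructor <;> rintro ⟨h₁, h₂⟩ <;> constructor <;> nlinarith
    simp only [mem_preimage, mem_ofPred_eq, mem_Ioo, ← hIoo]
    exact and_congr_right fun hx => by
      rw [hu_eq x (Ioo_subset_Icc_self hx), mul_eq_zero, or_iff_right hr.ne']
  have hinj : Function.Injective fun x : ℝ => ω * (x + 1) + ψ := fun x y h => by
    simpa [hω.ne'] using h
  have hsurj : Function.Surjective fun x : ℝ => ω * (x + 1) + ψ := fun t =>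
    ⟨(t - ψ) / ω - 1, by field_simp; ring⟩
  rw [hzeros, ncard_preimage_of_injective_subset_range hinj fun t _ => hsurj t] at hcount
  have hu₁ : u 1 = r * sin (ψ + 2 * ω) := by
    rw [hu_eq 1 (right_mem_Icc.2 hI.le)]
    ring_nf
  have hsign' : if Even k then 0 < sin (ψ + 2 * ω) else sin (ψ + 2 * ω) < 0 := by
    rw [hu₁] at hsign
    split_ifs at hsign ⊢
    · exact pos_of_mul_pos_right hsign hr.le
    · exact neg_of_mul_neg_right hsign hr.le
  obtain ⟨hlo, hhi⟩ := mul_pi_lt_and_lt_of_ncard_zeros hψ (by linarith) hsign' hcount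
  obtain ⟨hψ₁, hψ₂⟩ := abs_lt.1 hψ
  constructor <;> linarith

theorem stmt8_general (lam : ℝ) (hlam : 0 < lam) (u : ℝ → ℝ)
    (hu : ContDiffOn ℝ 2 u (Set.Icc (-1 : ℝ) 1))
    (hode : ∀ x ∈ Set.Ioo (-1 : ℝ) 1, deriv (deriv u) x = -lam * u x)
    (k : ℕ) (hR : RkPlus k u ∨ RkPlus k (-u)) :
    (if k = 0 then (0 : ℝ)
      else ((2 * (k : ℝ) - 1) * Real.pi / 4) ^ 2) < lam ∧
    lam < ((2 * (k : ℝ) + 3) * Real.pi / 4) ^ 2 := by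
  have hω : 0 < √lam := sqrt_pos.2 hlam
  have hode' : ∀ x ∈ Ioo (-1 : ℝ) 1, deriv (deriv u) x = -√lam ^ 2 * u x := by
    simpa only [sq_sqrt hlam.le] using hode
  obtain ⟨hlo, hhi⟩ : (2 * k - 1) * π / 4 < √lam ∧ √lam < (2 * k + 3) * π / 4 := by
    rcases hR with hR | hR
    · exact hR.frequency_bounds hω hu hode'
    · refine hR.frequency_bounds hω hu.neg fun x hx => ?_
      rw [deriv.fun_neg', deriv.fun_neg, hode' x hx, mul_neg]
  refine ⟨?_, (sqrt_lt' (by positivity)).1 hhi⟩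
  split_ifs with hk
  · exact hlam
  · have hk₁ : (1 : ℝ) ≤ k := Nat.one_le_cast.2 (Nat.one_le_iff_ne_zero.2 hk)
    exact (lt_sqrt (by nlinarith [pi_pos])).1 hlo

/-- If `u ∈ R_k` is a nontrivial solution of `-u'' = λ u` on `(-1,1)`, then
`λ_{k-1}^M < λ < λ_{k+1}^M`, where `λ_j^M = ((2j+1)π/4)²` (`λ_{-1}^M := 0`). -/
theorem stmt8 (lam : ℝ) (hlam : 0 < lam) (u : ℝ → ℝ)
    (hu : ContDiffOn ℝ 2 u (Set.Icc (-1 : ℝ) 1))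
    (hode : ∀ x ∈ Set.Ioo (-1 : ℝ) 1, deriv (deriv u) x = -lam * u x)
    (hnt : ∃ x ∈ Set.Icc (-1 : ℝ) 1, u x ≠ 0)
    (k : ℕ) (hR : RkPlus k u ∨ RkPlus k (-u)) :
    (if k = 0 then (0 : ℝ)
      else ((2 * (k : ℝ) - 1) * Real.pi / 4) ^ 2) < lam ∧
    lam < ((2 * (k : ℝ) + 3) * Real.pi / 4) ^ 2 :=
  stmt8_general lam hlam u hu hode k hR
end

section
/- For each integer k ≥ 0 and each sign ν ∈ {+,-}, the nodal set S_k^ν is open in C²[-1,1], and the sets S_k^ν for distinct (k,ν) are pairwise disjoint. -/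
/-- The nodal set `S_k^+` in `C²[-1,1]`. -/
def SPlus (k : ℕ) (u : ℝ → ℝ) : Prop :=
  ContDiffOn ℝ 2 u (Set.Icc (-1 : ℝ) 1) ∧
  u (-1) ≠ 0 ∧ u 1 ≠ 0 ∧ 0 < u (-1) ∧
  (∀ x ∈ Set.Ioo (-1 : ℝ) 1, u x = 0 → deriv u x ≠ 0) ∧
  {x ∈ Set.Ioo (-1 : ℝ) 1 | u x = 0}.Finite ∧
  {x ∈ Set.Ioo (-1 : ℝ) 1 | u x = 0}.ncard = k

/-- `S_k^ν`, where `ν = true` is `+` and `ν = false` is `-` (`S_k^- = -S_k^+`). -/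
def SNodal (k : ℕ) (ν : Bool) (u : ℝ → ℝ) : Prop :=
  if ν then SPlus k u else SPlus k (-u)

/-!
The finitely many interior zeros of `u` are simple, so they sit in small disjoint balls on which
`u'` keeps its sign and stays away from `0`, while `|u|` is bounded below on the compact rest of
`[-1, 1]`. A `C¹`-close `v` then has no zero off the balls, has the signs of `u` at their endpoints
and is strictly monotone on each of them, hence has exactly one zero, a simple one, in each ball.
The classes are disjoint because `k` is the number of interior zeros and `ν` the sign of `u (-1)`.
-/

open Set Filter Topology Metric

lemma mul_pos_of_abs_sub_lt_abs {α : Type*} [Field α] [LinearOrder α] [IsStrictOrderedRing α]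
    {a b : α} (h : |a - b| < |b|) : 0 < a * b := by
  rcases lt_or_gt_of_ne (abs_pos.1 ((abs_nonneg _).trans_lt h)) with hb | hb
  · rw [abs_of_neg hb, abs_lt] at h; nlinarith
  · rw [abs_of_pos hb, abs_lt] at h; nlinarith

lemma Set.Finite.exists_closedBall_subset_pairwiseDisjoint {X : Type*} [MetricSpace X]
    {Z : Set X} (hZ : Z.Finite) {s : X → Set X} (hs : ∀ z ∈ Z, s z ∈ 𝓝 z) :
    ∃ δ > 0, (∀ z ∈ Z, closedBall z δ ⊆ s z) ∧ Z.PairwiseDisjoint (closedBall · δ) := by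
  have hsub : ∀ᶠ δ in 𝓝 (0 : ℝ), ∀ z ∈ Z, closedBall z δ ⊆ s z :=
    (eventually_all_finite hZ).2 fun z hz => eventually_closedBall_subset (hs z hz)
  have hsep : ∀ᶠ δ in 𝓝 (0 : ℝ), ∀ z ∈ Z, ∀ z' ∈ Z, z ≠ z' → δ + δ < dist z z' := by
    refine (eventually_all_finite hZ).2 fun z _ => (eventually_all_finite hZ).2 fun z' _ => ?_
    by_cases hzz' : z = z'
    · exact Eventually.of_forall fun _ h => absurd hzz' h
    · filter_upwards [Iio_mem_nhds (half_pos (dist_pos.2 hzz'))] with δ hδ _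
      linarith [mem_Iio.1 hδ]
  obtain ⟨δ, hδ, hsub, hsep⟩ := (hsub.and hsep).exists_gt
  exact ⟨δ, hδ, hsub, fun z hz z' hz' h => closedBall_disjoint_closedBall (hsep z hz z' hz' h)⟩

lemma Set.Finite.exists_pos_forall_lt {ι : Type*} {Z : Set ι} (hZ : Z.Finite) {r : ι → ℝ}
    (hr : ∀ z ∈ Z, 0 < r z) : ∃ ε > 0, ∀ z ∈ Z, ε < r z :=
  ((eventually_all_finite hZ).2 fun z hz => eventually_lt_nhds (hr z hz)).exists_gt

lemma notMem_biUnion_ball_of_dist_eq {X : Type*} [MetricSpace X] {Z : Set X} {δ : ℝ}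
    (hdisj : Z.PairwiseDisjoint (closedBall · δ)) {x z : X} (hz : z ∈ Z) (hx : dist x z = δ) :
    x ∉ ⋃ z' ∈ Z, ball z' δ := by
  simp only [mem_iUnion, not_exists]
  intro z' hz' hxz'
  rcases eq_or_ne z z' with rfl | hne
  · exact (mem_ball.1 hxz').ne hx
  · exact hne (hdisj.elim_set hz hz' x (mem_closedBall.2 hx.le) (ball_subset_closedBall hxz'))

lemma encard_eq_of_inter_eq_singleton {α ι : Type*} {W : Set α} {Z : Set ι} {B : ι → Set α}
    (hB : Z.PairwiseDisjoint B) (hW : W ⊆ ⋃ z ∈ Z, B z) (hWB : ∀ z ∈ Z, ∃ w, W ∩ B z = {w}) :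
    W.encard = Z.encard := by
  rcases Z.eq_empty_or_nonempty with rfl | ⟨z₀, hz₀⟩
  · simp_all
  have : Nonempty α := ⟨(hWB z₀ hz₀).choose⟩
  choose! ζ hζ using hWB
  have hζW : ∀ z ∈ Z, ζ z ∈ W ∩ B z := fun z hz => (hζ z hz).symm ▸ rfl
  have himage : W = ζ '' Z := by
    refine Subset.antisymm (fun x hx => ?_) (image_subset_iff.2 fun z hz => (hζW z hz).1)
    obtain ⟨z, hz, hxz⟩ := mem_iUnion₂.1 (hW hx)
    exact ⟨z, hz, ((hζ z hz).subset ⟨hx, hxz⟩).symm⟩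
  have hinj : InjOn ζ Z := fun z hz z' hz' h =>
    hB.elim_set hz hz' (ζ z) (hζW z hz).2 (h ▸ (hζW z' hz').2)
  rw [himage, hinj.encard_image]

lemma strictMonoOn_const_mul_of_deriv_mul_pos {f : ℝ → ℝ} {a b s : ℝ}
    (hf : ContinuousOn f (Icc a b)) (hd : ∀ y ∈ Ioo a b, 0 < deriv f y * s) :
    StrictMonoOn (fun x => s * f x) (Icc a b) := by
  refine strictMonoOn_of_deriv_pos (convex_Icc a b) (continuousOn_const.mul hf) fun y hy => ?_
  rw [interior_Icc] at hy
  have hfy : DifferentiableAt ℝ f y :=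
    differentiableAt_of_deriv_ne_zero (left_ne_zero_of_mul (hd y hy).ne')
  rw [deriv_const_mul s hfy, mul_comm]
  exact hd y hy

lemma mul_neg_of_deriv_mul_pos {f : ℝ → ℝ} {a b s z : ℝ} (hf : ContinuousOn f (Icc a b))
    (hd : ∀ y ∈ Ioo a b, 0 < deriv f y * s) (hz : z ∈ Ioo a b) (hfz : f z = 0) :
    f a * f b < 0 := by
  have hmono := strictMonoOn_const_mul_of_deriv_mul_pos hf hd
  have hab : a ≤ b := (hz.1.trans hz.2).le
  have ha : s * f a < 0 := by
    simpa [hfz] using hmono (left_mem_Icc.2 hab) (Ioo_subset_Icc_self hz) hz.1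
  have hb : 0 < s * f b := by
    simpa [hfz] using hmono (Ioo_subset_Icc_self hz) (right_mem_Icc.2 hab) hz.2
  nlinarith [sq_nonneg s]

lemma injOn_of_deriv_ne_zero {f : ℝ → ℝ} {a b : ℝ} (hf : ContinuousOn f (Icc a b))
    (hd : ∀ y ∈ Ioo a b, deriv f y ≠ 0) : InjOn f (Icc a b) := by
  intro x hx y hy hfxy
  by_contra hne
  wlog hxy : x < y generalizing x y
  · exact this hy hx hfxy.symm (Ne.symm hne) ((Ne.symm hne).lt_of_le (not_lt.1 hxy))
  obtain ⟨c, hc, hc0⟩ := exists_deriv_eq_zero hxy (hf.mono (Icc_subset_Icc hx.1 hy.2)) hfxy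
  exact hd c ⟨hx.1.trans_lt hc.1, hc.2.trans_le hy.2⟩ hc0

lemma exists_zero_unique_of_mul_neg {f : ℝ → ℝ} {a b : ℝ} (hab : a ≤ b)
    (hf : ContinuousOn f (Icc a b)) (hfab : f a * f b < 0) (hd : ∀ y ∈ Ioo a b, deriv f y ≠ 0) :
    ∃ ζ ∈ Ioo a b, ∀ x ∈ Icc a b, f x = 0 ↔ x = ζ := by
  have h0 : (0 : ℝ) ∈ uIcc (f a) (f b) := by
    rcases mul_neg_iff.1 hfab with h | h
    · exact mem_uIcc.2 (Or.inr ⟨h.2.le, h.1.le⟩)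
    · exact mem_uIcc.2 (Or.inl ⟨h.1.le, h.2.le⟩)
  rw [← uIcc_of_le hab] at hf
  obtain ⟨ζ, hζ, hζ0⟩ := intermediate_value_uIcc hf h0
  rw [uIcc_of_le hab] at hf hζ
  have hζa : ζ ≠ a := by rintro rfl; simp [hζ0] at hfab
  have hζb : ζ ≠ b := by rintro rfl; simp [hζ0] at hfab
  refine ⟨ζ, ⟨lt_of_le_of_ne hζ.1 hζa.symm, lt_of_le_of_ne hζ.2 hζb⟩, fun x hx => ⟨fun hx0 => ?_, ?_⟩⟩
  · exact injOn_of_deriv_ne_zero hf hd hx hζ (hx0.trans hζ0.symm)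
  · rintro rfl; exact hζ0

lemma exists_zero_unique_closedBall {u v : ℝ → ℝ} {s z δ : ℝ} (hδ : 0 < δ) (huz : u z = 0)
    (hu : ContinuousOn u (closedBall z δ)) (hv : ContinuousOn v (closedBall z δ))
    (hu' : ∀ y ∈ ball z δ, 0 < deriv u y * s) (hv' : ∀ y ∈ ball z δ, deriv v y ≠ 0)
    (ha : 0 < v (z - δ) * u (z - δ)) (hb : 0 < v (z + δ) * u (z + δ)) :
    ∃ ζ, {x ∈ closedBall z δ | v x = 0} = {ζ} := by
  rw [Real.closedBall_eq_Icc] at hu hv ⊢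
  rw [Real.ball_eq_Ioo] at hu' hv'
  have hz : z ∈ Ioo (z - δ) (z + δ) := ⟨by linarith, by linarith⟩
  have hu_ab := mul_neg_of_deriv_mul_pos hu hu' hz huz
  have hv_ab : v (z - δ) * v (z + δ) < 0 := by nlinarith [mul_pos ha hb]
  obtain ⟨ζ, hζ, hζv⟩ := exists_zero_unique_of_mul_neg (hz.1.trans hz.2).le hv hv_ab hv'
  refine ⟨ζ, Subset.antisymm (fun x hx => (hζv x hx.1).1 hx.2) ?_⟩
  rintro x rfl
  exact ⟨Ioo_subset_Icc_self hζ, (hζv x (Ioo_subset_Icc_self hζ)).2 rfl⟩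

def interiorZeros (u : ℝ → ℝ) : Set ℝ := {x ∈ Ioo (-1 : ℝ) 1 | u x = 0}

lemma SPlus.exists_isolating_radius {k : ℕ} {u : ℝ → ℝ} (h : SPlus k u) :
    ∃ δ > 0, ∃ ε > 0, (interiorZeros u).PairwiseDisjoint (closedBall · δ) ∧
      (∀ z ∈ interiorZeros u, closedBall z δ ⊆ Ioo (-1 : ℝ) 1) ∧
      (∀ z ∈ interiorZeros u, ∀ y ∈ closedBall z δ, |deriv u y - deriv u z| + ε < |deriv u z|) ∧
      ∀ x ∈ Icc (-1 : ℝ) 1 \ ⋃ z ∈ interiorZeros u, ball z δ, ε ≤ |u x| := by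
  obtain ⟨hu, -, hu1, hpos, hsimple, hfin, -⟩ := h
  have hu'z : ∀ z ∈ interiorZeros u, 0 < |deriv u z| / 2 := fun z hz =>
    half_pos (abs_pos.2 (hsimple z hz.1 hz.2))
  have hnhds : ∀ z ∈ interiorZeros u,
      {y ∈ Ioo (-1 : ℝ) 1 | |deriv u y - deriv u z| < |deriv u z| / 2} ∈ 𝓝 z := by
    intro z hz
    have hcont : ContinuousAt (deriv u) z :=
      ((hu.mono Ioo_subset_Icc_self).continuousOn_deriv_of_isOpen isOpen_Ioo (by norm_num))
        |>.continuousAt (Ioo_mem_nhds hz.1.1 hz.1.2)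
    filter_upwards [Ioo_mem_nhds hz.1.1 hz.1.2, hcont.eventually (ball_mem_nhds _ (hu'z z hz))]
      with y h1 h2 using ⟨h1, h2⟩
  obtain ⟨δ, hδ, hball, hdisj⟩ := hfin.exists_closedBall_subset_pairwiseDisjoint hnhds
  have huK : ∀ x ∈ Icc (-1 : ℝ) 1 \ ⋃ z ∈ interiorZeros u, ball z δ, 0 < |u x| := by
    rintro x ⟨hx, hxU⟩
    refine abs_pos.2 fun hx0 => hxU (mem_biUnion ⟨⟨?_, ?_⟩, hx0⟩ (mem_ball_self hδ))
    · exact hx.1.lt_of_ne (by rintro rfl; linarith)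
    · exact hx.2.lt_of_ne (by rintro rfl; exact hu1 hx0)
  obtain ⟨c, hc, hcK⟩ := (isCompact_Icc.diff (isOpen_biUnion fun _ _ => isOpen_ball))
    |>.exists_forall_le' (hu.continuousOn.mono sdiff_subset).abs huK
  obtain ⟨ε, hε, hεZ⟩ := hfin.exists_pos_forall_lt hu'z
  refine ⟨δ, hδ, min ε c, lt_min hε hc, hdisj, fun z hz y hy => (hball z hz hy).1,
    fun z hz y hy => ?_, fun x hx => (min_le_right _ _).trans (hcK x hx)⟩
  linarith [(hball z hz hy).2, min_le_left ε c, hεZ z hz]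

lemma SPlus.of_sign_control {k : ℕ} {u v : ℝ → ℝ} {δ : ℝ} (h : SPlus k u)
    (hv : ContDiffOn ℝ 2 v (Icc (-1 : ℝ) 1)) (hδ : 0 < δ)
    (hdisj : (interiorZeros u).PairwiseDisjoint (closedBall · δ))
    (hball : ∀ z ∈ interiorZeros u, closedBall z δ ⊆ Ioo (-1 : ℝ) 1)
    (hu' : ∀ z ∈ interiorZeros u, ∀ y ∈ closedBall z δ, 0 < deriv u y * deriv u z)
    (hv' : ∀ z ∈ interiorZeros u, ∀ y ∈ closedBall z δ, 0 < deriv v y * deriv u z)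
    (hvK : ∀ x ∈ Icc (-1 : ℝ) 1 \ ⋃ z ∈ interiorZeros u, ball z δ, 0 < v x * u x) :
    SPlus k v := by
  obtain ⟨hu, -, -, hpos, -, hfin, hcard⟩ := h
  set Z := interiorZeros u
  have hsubI : ∀ z ∈ Z, closedBall z δ ⊆ Icc (-1) 1 := fun z hz =>
    (hball z hz).trans Ioo_subset_Icc_self
  have hcover : interiorZeros v ⊆ ⋃ z ∈ Z, closedBall z δ := by
    rintro x ⟨hxI, hx0⟩
    by_contra hxU
    have hxK : x ∉ ⋃ z ∈ Z, ball z δ :=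
      fun h => hxU (biUnion_mono subset_rfl (fun _ _ => ball_subset_closedBall) h)
    simpa [hx0] using hvK x ⟨Ioo_subset_Icc_self hxI, hxK⟩
  have hloc : ∀ z ∈ Z, ∃ ζ, interiorZeros v ∩ closedBall z δ = {ζ} := by
    intro z hz
    have hvend : ∀ x, dist x z = δ → 0 < v x * u x := fun x hx =>
      hvK x ⟨hsubI z hz (mem_closedBall.2 hx.le), notMem_biUnion_ball_of_dist_eq hdisj hz hx⟩
    obtain ⟨ζ, hζ⟩ := exists_zero_unique_closedBall hδ hz.2
      (hu.continuousOn.mono (hsubI z hz)) (hv.continuousOn.mono (hsubI z hz))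
      (fun y hy => hu' z hz y (ball_subset_closedBall hy))
      (fun y hy => left_ne_zero_of_mul (hv' z hz y (ball_subset_closedBall hy)).ne')
      (hvend _ (by simp [abs_of_pos hδ])) (hvend _ (by simp [abs_of_pos hδ]))
    refine ⟨ζ, hζ ▸ ?_⟩
    ext x
    exact ⟨fun ⟨⟨_, hx0⟩, hxB⟩ => ⟨hxB, hx0⟩, fun ⟨hxB, hx0⟩ => ⟨⟨hball z hz hxB, hx0⟩, hxB⟩⟩
  have hcount := encard_eq_of_inter_eq_singleton hdisj hcover hloc
  have hUsub : ⋃ z ∈ Z, ball z δ ⊆ Ioo (-1 : ℝ) 1 :=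
    iUnion₂_subset fun z hz => ball_subset_closedBall.trans (hball z hz)
  have hvm1 : 0 < v (-1) :=
    (pos_iff_pos_of_mul_pos (hvK (-1) ⟨by norm_num, fun h => (hUsub h).1.false⟩)).2 hpos
  refine ⟨hv, hvm1.ne', ?_, hvm1, ?_, ?_, ?_⟩
  · exact left_ne_zero_of_mul (hvK 1 ⟨by norm_num, fun h => (hUsub h).2.false⟩).ne'
  · intro x hxI hx0
    obtain ⟨z, hz, hxz⟩ := mem_iUnion₂.1 (hcover ⟨hxI, hx0⟩)
    exact left_ne_zero_of_mul (hv' z hz x hxz).ne'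
  · rw [← encard_lt_top_iff]
    exact hcount ▸ encard_lt_top_iff.2 hfin
  · rw [ncard_def]
    exact hcount ▸ hcard

lemma SPlus.exists_C1_nhds {k : ℕ} {u : ℝ → ℝ} (h : SPlus k u) :
    ∃ ε > 0, ∀ v : ℝ → ℝ, ContDiffOn ℝ 2 v (Icc (-1 : ℝ) 1) →
      (∀ x ∈ Icc (-1 : ℝ) 1, |v x - u x| < ε ∧ |deriv v x - deriv u x| < ε) → SPlus k v := by
  obtain ⟨δ, hδ, ε, hε, hdisj, hball, hu', huK⟩ := h.exists_isolating_radius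
  refine ⟨ε, hε, fun v hv hclose => h.of_sign_control hv hδ hdisj hball
    (fun z hz y hy => ?_) (fun z hz y hy => ?_)
    (fun x hx => mul_pos_of_abs_sub_lt_abs ((hclose x hx.1).1.trans_le (huK x hx)))⟩
  · exact mul_pos_of_abs_sub_lt_abs (by linarith [hu' z hz y hy])
  · refine mul_pos_of_abs_sub_lt_abs ?_
    calc |deriv v y - deriv u z| ≤ |deriv v y - deriv u y| + |deriv u y - deriv u z| :=
          abs_sub_le _ _ _
      _ < |deriv u z| := by
          linarith [hu' z hz y hy, (hclose y (Ioo_subset_Icc_self (hball z hz hy))).2]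

lemma SNodal.exists_C1_nhds {k : ℕ} {ν : Bool} {u : ℝ → ℝ} (h : SNodal k ν u) :
    ∃ ε > 0, ∀ v : ℝ → ℝ, ContDiffOn ℝ 2 v (Icc (-1 : ℝ) 1) →
      (∀ x ∈ Icc (-1 : ℝ) 1, |v x - u x| < ε ∧ |deriv v x - deriv u x| < ε) → SNodal k ν v := by
  cases ν
  · obtain ⟨ε, hε, hnhds⟩ := SPlus.exists_C1_nhds (u := -u) h
    refine ⟨ε, hε, fun v hv hclose => hnhds (-v) hv.neg fun x hx => ?_⟩
    rw [deriv.neg', deriv.neg']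
    simpa only [Pi.neg_apply, neg_sub_neg, abs_sub_comm] using hclose x hx
  · exact SPlus.exists_C1_nhds h

lemma SNodal.ncard_interiorZeros {k : ℕ} {ν : Bool} {u : ℝ → ℝ} (h : SNodal k ν u) :
    (interiorZeros u).ncard = k := by
  cases ν <;> obtain ⟨-, -, -, -, -, -, hcard⟩ := h
  · simpa only [interiorZeros, Pi.neg_apply, neg_eq_zero] using hcard
  · exact hcard

lemma SNodal.pos_iff {k : ℕ} {ν : Bool} {u : ℝ → ℝ} (h : SNodal k ν u) :
    0 < u (-1) ↔ ν = true := by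
  cases ν <;> obtain ⟨-, -, -, hpos, -⟩ := h
  · simpa using (neg_pos.1 hpos).le
  · simpa using hpos

/-- Each `S_k^ν` is open in `C²[-1,1]` (w.r.t. the sup-type `C²` norm), and the
sets `S_k^ν` for distinct `(k,ν)` are pairwise disjoint. -/
theorem stmt9 :
    (∀ (k : ℕ) (ν : Bool) (u : ℝ → ℝ), SNodal k ν u →
      ∃ ε > 0, ∀ v : ℝ → ℝ, ContDiffOn ℝ 2 v (Set.Icc (-1 : ℝ) 1) →
        (∀ x ∈ Set.Icc (-1 : ℝ) 1,
          |v x - u x| < ε ∧ |deriv v x - deriv u x| < ε ∧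
          |deriv (deriv v) x - deriv (deriv u) x| < ε) →
        SNodal k ν v) ∧
    (∀ (k k' : ℕ) (ν ν' : Bool) (u : ℝ → ℝ), (k, ν) ≠ (k', ν') →
      SNodal k ν u → ¬ SNodal k' ν' u) := by
  refine ⟨fun k ν u hu => ?_, fun k k' ν ν' u hne h h' => ?_⟩
  · obtain ⟨ε, hε, hnhds⟩ := hu.exists_C1_nhds
    exact ⟨ε, hε, fun v hv hclose => hnhds v hv fun x hx => (hclose x hx).imp_right And.left⟩
  · exact hne (Prod.ext (h.ncard_interiorZeros.symm.trans h'.ncard_interiorZeros)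
      (Bool.eq_iff_iff.2 (h.pos_iff.symm.trans h'.pos_iff)))
end
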